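/- Let G be a finite simple graph with no isolated vertices, n vertices, m edges, minimum degree δ and maximum degree Δ. Then R(G) ≥ n/2 − (m/2)·(1/√δ − 1/√Δ)², with equality if and only if every edge uv of G satisfies {d_u, d_v} = {δ, Δ} (i.e., G is regular or biregular). -/

import Mathlib

open Finset

variable {V : Type*}

/-- Randić index: `Σ_{uv∈E} (d_u d_v)^{-1/2}`, written as half a double sum over vertices. -/
noncomputable def randicIndex [Fintype V] (G : SimpleGraph V) [DecidableRel G.Adj] : ℝ :=
  (1 / 2) * ∑ u, ∑ v ∈ G.neighborFinset u,
    1 / Real.sqrt ((G.degree u : ℝ) * (G.degree v : ℝ))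

/-!
Writing `x_w = d_w^{-1/2}`, every edge term satisfies
`x_u x_v = (x_u² + x_v²)/2 - (x_u - x_v)²/2`. Summed over the edges, the first part gives
`Σ_{uv∈E} (1/d_u + 1/d_v)/2 = n/2` (each vertex `w` contributes `d_w · 1/(2 d_w)`), so
`R(G) = n/2 - ½ Σ_{uv∈E} (x_u - x_v)²`. All `x_w` lie in `[Δ^{-1/2}, δ^{-1/2}]`, hence each
`(x_u - x_v)²` is at most `(δ^{-1/2} - Δ^{-1/2})²`, with equality exactly when `{x_u, x_v}` are the
two endpoints, i.e. `{d_u, d_v} = {δ, Δ}`.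
-/

lemma one_div_sqrt_mul_eq {a b : ℝ} (ha : 0 < a) (hb : 0 < b) :
    1 / Real.sqrt (a * b) =
      1 / (2 * a) + 1 / (2 * b) - 1 / 2 * (1 / Real.sqrt a - 1 / Real.sqrt b) ^ 2 := by
  have hsa := Real.sqrt_pos.mpr ha
  have hsb := Real.sqrt_pos.mpr hb
  rw [Real.sqrt_mul ha.le, ← Real.sq_sqrt ha.le, ← Real.sq_sqrt hb.le, Real.sqrt_sq hsa.le,
    Real.sqrt_sq hsb.le]
  field_simp
  ring

lemma sq_sub_le_of_mem_Icc {lo hi a b : ℝ} (ha : a ∈ Set.Icc lo hi) (hb : b ∈ Set.Icc lo hi) :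
    (a - b) ^ 2 ≤ (hi - lo) ^ 2 :=
  sq_le_sq' (by linarith [ha.1, hb.2]) (by linarith [ha.2, hb.1])

lemma sq_sub_eq_iff_of_mem_Icc {lo hi a b : ℝ} (ha : a ∈ Set.Icc lo hi)
    (hb : b ∈ Set.Icc lo hi) :
    (a - b) ^ 2 = (hi - lo) ^ 2 ↔ a = hi ∧ b = lo ∨ a = lo ∧ b = hi := by
  constructor
  · intro h
    have hfactor : (a - b - (hi - lo)) * (a - b + (hi - lo)) = 0 := by linear_combination h
    rcases mul_eq_zero.mp hfactor with h | h
    · exact Or.inl ⟨by linarith [ha.2, hb.1], by linarith [ha.2, hb.1]⟩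
    · exact Or.inr ⟨by linarith [ha.1, hb.2], by linarith [ha.1, hb.2]⟩
  · rintro (⟨rfl, rfl⟩ | ⟨rfl, rfl⟩) <;> ring

lemma one_div_sqrt_natCast_inj {x y : ℕ} :
    1 / Real.sqrt (x : ℝ) = 1 / Real.sqrt (y : ℝ) ↔ x = y := by
  rw [one_div, one_div, inv_inj, Real.sqrt_inj (Nat.cast_nonneg _) (Nat.cast_nonneg _),
    Nat.cast_inj]

namespace SimpleGraph

variable [Fintype V] (G : SimpleGraph V) [DecidableRel G.Adj]

lemma sum_sum_neighborFinset_comm {M : Type*} [AddCommMonoid M] (f : V → V → M) :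
    ∑ u, ∑ v ∈ G.neighborFinset u, f u v = ∑ u, ∑ v ∈ G.neighborFinset u, f v u := by
  simp only [neighborFinset_eq_filter, sum_filter]
  rw [sum_comm]
  simp only [G.adj_comm]

lemma sum_sum_neighborFinset_const (c : ℝ) :
    ∑ u, ∑ _v ∈ G.neighborFinset u, c = 2 * #G.edgeFinset * c := by
  simp only [sum_const, card_neighborFinset_eq_degree, nsmul_eq_mul, ← sum_mul]
  exact_mod_cast congrArg (fun k : ℕ => (k : ℝ) * c) G.sum_degrees_eq_twice_card_edges

lemma sum_sum_neighborFinset_eq_zero_iff {f : V → V → ℝ}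
    (hf : ∀ u v, G.Adj u v → 0 ≤ f u v) :
    ∑ u, ∑ v ∈ G.neighborFinset u, f u v = 0 ↔ ∀ u v, G.Adj u v → f u v = 0 := by
  have hf' : ∀ u, ∀ v ∈ G.neighborFinset u, 0 ≤ f u v := fun u v hv =>
    hf u v ((G.mem_neighborFinset u v).mp hv)
  rw [sum_eq_zero_iff_of_nonneg fun u _ => sum_nonneg (hf' u)]
  simp only [mem_univ, true_implies, sum_eq_zero_iff_of_nonneg (hf' _), mem_neighborFinset]

variable {G}

lemma randicIndex_eq_sub_sum_sq (hiso : ∀ v, 0 < G.degree v) :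
    randicIndex G = Fintype.card V / 2 - 1 / 4 * ∑ u, ∑ v ∈ G.neighborFinset u,
      (1 / Real.sqrt (G.degree u : ℝ) - 1 / Real.sqrt (G.degree v : ℝ)) ^ 2 := by
  have hdeg : ∀ w, (0 : ℝ) < G.degree w := fun w => by exact_mod_cast hiso w
  have hhalf : ∀ u, ∑ _v ∈ G.neighborFinset u, 1 / (2 * (G.degree u : ℝ)) = 1 / 2 := by
    intro u
    rw [sum_const, card_neighborFinset_eq_degree, nsmul_eq_mul]
    field_simp [(hdeg u).ne']
  rw [randicIndex]
  simp only [one_div_sqrt_mul_eq (hdeg _) (hdeg _), sum_sub_distrib, sum_add_distrib,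
    ← mul_sum]
  rw [G.sum_sum_neighborFinset_comm fun _ v => 1 / (2 * (G.degree v : ℝ))]
  simp only [hhalf, sum_const, card_univ, nsmul_eq_mul]
  ring

lemma one_div_sqrt_degree_mem_Icc (hiso : ∀ v, 0 < G.degree v) (w : V) :
    1 / Real.sqrt (G.degree w : ℝ) ∈
      Set.Icc (1 / Real.sqrt (G.maxDegree : ℝ)) (1 / Real.sqrt (G.minDegree : ℝ)) := by
  have : Nonempty V := ⟨w⟩
  obtain ⟨z, hz⟩ := G.exists_minimal_degree_vertex
  have hmin : (0 : ℝ) < G.minDegree := by rw [hz]; exact_mod_cast hiso z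
  have hw : (0 : ℝ) < G.degree w := by exact_mod_cast hiso w
  exact ⟨one_div_le_one_div_of_le (Real.sqrt_pos.mpr hw)
      (Real.sqrt_le_sqrt (by exact_mod_cast G.degree_le_maxDegree w)),
    one_div_le_one_div_of_le (Real.sqrt_pos.mpr hmin)
      (Real.sqrt_le_sqrt (by exact_mod_cast G.minDegree_le_degree w))⟩

lemma sq_one_div_sqrt_degree_sub_le (hiso : ∀ v, 0 < G.degree v) (u v : V) :
    (1 / Real.sqrt (G.degree u : ℝ) - 1 / Real.sqrt (G.degree v : ℝ)) ^ 2 ≤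
      (1 / Real.sqrt (G.minDegree : ℝ) - 1 / Real.sqrt (G.maxDegree : ℝ)) ^ 2 :=
  sq_sub_le_of_mem_Icc (one_div_sqrt_degree_mem_Icc hiso u) (one_div_sqrt_degree_mem_Icc hiso v)

lemma sq_one_div_sqrt_degree_sub_eq_iff (hiso : ∀ v, 0 < G.degree v) (u v : V) :
    (1 / Real.sqrt (G.degree u : ℝ) - 1 / Real.sqrt (G.degree v : ℝ)) ^ 2 =
        (1 / Real.sqrt (G.minDegree : ℝ) - 1 / Real.sqrt (G.maxDegree : ℝ)) ^ 2 ↔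
      ({G.degree u, G.degree v} : Set ℕ) = {G.minDegree, G.maxDegree} := by
  rw [sq_sub_eq_iff_of_mem_Icc (one_div_sqrt_degree_mem_Icc hiso u)
    (one_div_sqrt_degree_mem_Icc hiso v), Set.pair_eq_pair_iff]
  simp only [one_div_sqrt_natCast_inj]

end SimpleGraph

theorem randic_lower_biregular [Fintype V] (G : SimpleGraph V) [DecidableRel G.Adj]
    (hiso : ∀ v : V, 0 < G.degree v) :
    randicIndex G ≥ (Fintype.card V : ℝ) / 2 -
      (G.edgeFinset.card : ℝ) / 2 *
        (1 / Real.sqrt (G.minDegree : ℝ) - 1 / Real.sqrt (G.maxDegree : ℝ))^2 ∧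
    (randicIndex G = (Fintype.card V : ℝ) / 2 -
        (G.edgeFinset.card : ℝ) / 2 *
          (1 / Real.sqrt (G.minDegree : ℝ) - 1 / Real.sqrt (G.maxDegree : ℝ))^2 ↔
      ∀ u v, G.Adj u v →
        ({G.degree u, G.degree v} : Set ℕ) = {G.minDegree, G.maxDegree}) := by
  set c := 1 / Real.sqrt (G.minDegree : ℝ) - 1 / Real.sqrt (G.maxDegree : ℝ)
  set x : V → ℝ := fun w => 1 / Real.sqrt (G.degree w : ℝ)
  have hgap : randicIndex G - (Fintype.card V / 2 - #G.edgeFinset / 2 * c ^ 2) =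
      1 / 4 * ∑ u, ∑ v ∈ G.neighborFinset u, (c ^ 2 - (x u - x v) ^ 2) := by
    rw [SimpleGraph.randicIndex_eq_sub_sum_sq hiso]
    simp only [x, sum_sub_distrib, G.sum_sum_neighborFinset_const]
    ring
  have hnonneg : ∀ u v, G.Adj u v → 0 ≤ c ^ 2 - (x u - x v) ^ 2 := fun u v _ =>
    sub_nonneg.mpr (SimpleGraph.sq_one_div_sqrt_degree_sub_le hiso u v)
  have hsum := sum_nonneg fun u (_ : u ∈ univ) => sum_nonneg fun v hv =>
    hnonneg u v ((G.mem_neighborFinset u v).mp hv)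
  refine ⟨by linarith, ?_⟩
  rw [← sub_eq_zero, hgap, mul_eq_zero, or_iff_right (by norm_num),
    G.sum_sum_neighborFinset_eq_zero_iff hnonneg]
  refine forall₂_congr fun u v => imp_congr_right fun _ => ?_
  rw [sub_eq_zero, eq_comm]
  exact SimpleGraph.sq_one_div_sqrt_degree_sub_eq_iff hiso u v
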